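/- arXiv:2305.06717 — 5 statements merged into one kernel-verified Lean document; each statement's English description precedes it below -/
import Mathlib

section
/- For a₀, b₀ > 0, the arithmetic–geometric mean satisfies Gauss's formula: π/(2·M(a₀,b₀)) = ∫₀^{π/2} dφ/√(a₀²cos²φ + b₀²sin²φ). -/
open MeasureTheory Set Real Filter intervalIntegral


lemma gauss_cont (a b : ℝ) (ha : 0 < a) (hb : 0 < b) :
    Continuous (fun t : ℝ => 1 / Real.sqrt ((t^2+a^2)*(t^2+b^2))) := by
  apply continuous_const.div
  · exact Real.continuous_sqrt.comp (by continuity)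
  · intro t
    have : 0 < (t^2+a^2)*(t^2+b^2) := by positivity
    exact (Real.sqrt_pos.2 this).ne'

lemma gauss_integrable (a b : ℝ) (ha : 0 < a) (hb : 0 < b) :
    Integrable (fun t : ℝ => 1 / Real.sqrt ((t^2+a^2)*(t^2+b^2))) := by
  set c := min a b with hcdef
  have hc : 0 < c := lt_min ha hb
  have hdom : Integrable (fun t : ℝ => c⁻¹ * (1 + (t/c)^2)⁻¹ * c⁻¹) :=
    ((integrable_inv_one_add_sq.comp_div hc.ne').const_mul c⁻¹).mul_const c⁻¹
  refine hdom.mono ((gauss_cont a b ha hb).aestronglyMeasurable) (ae_of_all _ fun t => ?_)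
  have hca : c ≤ a := min_le_left a b
  have hcb : c ≤ b := min_le_right a b
  have hca2 : c^2 ≤ a^2 := by nlinarith
  have hcb2 : c^2 ≤ b^2 := by nlinarith
  have h1 : (t^2+c^2)^2 ≤ (t^2+a^2)*(t^2+b^2) := by
    rw [sq]
    exact mul_le_mul (by linarith) (by linarith) (by positivity) (by positivity)
  have h2 : (t^2+c^2) ≤ Real.sqrt ((t^2+a^2)*(t^2+b^2)) := by
    rw [show (t^2+c^2) = Real.sqrt ((t^2+c^2)^2) from (Real.sqrt_sq (by positivity)).symm]
    exact Real.sqrt_le_sqrt h1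
  have hpos : 0 < t^2+c^2 := by positivity
  have hsp : 0 < Real.sqrt ((t^2+a^2)*(t^2+b^2)) := lt_of_lt_of_le hpos h2
  have heq : c⁻¹ * (1 + (t/c)^2)⁻¹ * c⁻¹ = (t^2+c^2)⁻¹ := by
    field_simp
    ring
  rw [Real.norm_eq_abs, Real.norm_eq_abs, heq, abs_of_pos (by positivity), abs_of_pos (by positivity)]
  rw [one_div]
  exact inv_anti₀ hpos h2

lemma J_step (a b : ℝ) (ha : 0 < a) (hb : 0 < b) :
    (∫ t in Ioi (0:ℝ), 1 / Real.sqrt ((t^2+a^2)*(t^2+b^2)))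
      = ∫ t in Ioi (0:ℝ), 1 / Real.sqrt ((t^2+((a+b)/2)^2)*(t^2+(Real.sqrt (a*b))^2)) := by
  set a1 := (a+b)/2 with ha1
  set b1 := Real.sqrt (a*b) with hb1
  have hab : 0 < a*b := mul_pos ha hb
  have ha1p : 0 < a1 := by rw [ha1]; linarith
  have hb1p : 0 < b1 := Real.sqrt_pos.2 hab
  set g1 : ℝ → ℝ := fun u => 1 / Real.sqrt ((u^2+a1^2)*(u^2+b1^2)) with hg1
  set f : ℝ → ℝ := fun t => (t - a*b*t⁻¹)/2 with hf
  -- image is everything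
  have himg : f '' Ioi 0 = univ := by
    apply eq_univ_of_forall
    intro u
    have hs : 0 ≤ u^2 + a*b := by positivity
    have habs : |u| < Real.sqrt (u^2 + a*b) := by
      rw [← Real.sqrt_sq_eq_abs]
      exact Real.sqrt_lt_sqrt (sq_nonneg u) (by nlinarith)
    have htpos : 0 < u + Real.sqrt (u^2 + a*b) := by
      have := neg_abs_le u; linarith
    refine ⟨u + Real.sqrt (u^2 + a*b), htpos, ?_⟩
    show (_ - a*b*(_)⁻¹)/2 = u
    field_simp
    nlinarith [Real.sq_sqrt hs]
  -- injectivity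
  have hinj : InjOn f (Ioi 0) := by
    have hsm : StrictMonoOn f (Ioi 0) := by
      intro x hx y hy hxy
      simp only [hf]
      have hx0 : (0:ℝ) < x := hx
      have hy0 : (0:ℝ) < y := hy
      have h2 : a*b*y⁻¹ < a*b*x⁻¹ := by
        apply mul_lt_mul_of_pos_left _ hab
        exact inv_strictAnti₀ hx0 hxy
      linarith
    exact hsm.injOn
  -- derivative
  have hderiv : ∀ t ∈ Ioi (0:ℝ), HasDerivWithinAt f ((1 + a*b/t^2)/2) (Ioi 0) t := by
    intro t ht
    have ht0 : t ≠ 0 := (mem_Ioi.mp ht).ne'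
    have hd : HasDerivAt (fun s : ℝ => a*b * s⁻¹) (a*b * (-(t^2)⁻¹)) t :=
      (hasDerivAt_inv ht0).const_mul (a*b)
    have h2 := ((hasDerivAt_id' (𝕜 := ℝ) t).sub hd).div_const 2
    have h3 : HasDerivAt f ((1 + a*b/t^2)/2) t := by
      rw [show (1 + a*b/t^2)/2 = (1 - a*b*-(t^2)⁻¹)/2 by ring]
      exact h2
    exact h3.hasDerivWithinAt
  -- pointwise identity
  have key : ∀ t ∈ Ioi (0:ℝ),
      |(1 + a*b/t^2)/2| • g1 (f t) = 2 * (1 / Real.sqrt ((t^2+a^2)*(t^2+b^2))) := by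
    intro t ht
    have ht0 : (0:ℝ) < t := ht
    have hA : (0:ℝ) ≤ (t^2+a^2)*(t^2+b^2) := by positivity
    have hb1sq : b1^2 = a*b := Real.sq_sqrt hab.le
    have e1 : ((f t)^2 + a1^2) * ((f t)^2 + b1^2)
        = (Real.sqrt ((t^2+a^2)*(t^2+b^2)) * ((t^2+a*b)/(4*t^2)))^2 := by
      rw [hb1sq, mul_pow, Real.sq_sqrt hA]
      simp only [hf, ha1]
      field_simp
      ring
    have hspos : 0 < Real.sqrt ((t^2+a^2)*(t^2+b^2)) := Real.sqrt_pos.2 (by positivity)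
    have e2 : Real.sqrt (((f t)^2 + a1^2) * ((f t)^2 + b1^2))
        = Real.sqrt ((t^2+a^2)*(t^2+b^2)) * ((t^2+a*b)/(4*t^2)) := by
      rw [e1, Real.sqrt_sq (by positivity)]
    have hderpos : 0 < (1 + a*b/t^2)/2 := by positivity
    rw [abs_of_pos hderpos, smul_eq_mul, hg1]
    simp only
    rw [e2]
    field_simp
    ring
  -- assemble
  have hmeas : MeasurableSet (Ioi (0:ℝ)) := measurableSet_Ioi
  have h1 : (∫ u, g1 u) = ∫ t in Ioi (0:ℝ), |(1 + a*b/t^2)/2| • g1 (f t) := by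
    rw [← setIntegral_univ, ← himg]
    exact integral_image_eq_integral_abs_deriv_smul hmeas hderiv hinj g1
  have h2 : (∫ t in Ioi (0:ℝ), |(1 + a*b/t^2)/2| • g1 (f t))
      = ∫ t in Ioi (0:ℝ), 2 * (1 / Real.sqrt ((t^2+a^2)*(t^2+b^2))) :=
    setIntegral_congr_fun hmeas key
  -- evenness
  have hint1 : Integrable g1 := gauss_integrable a1 b1 ha1p hb1p
  have heven : (∫ u in Iic (0:ℝ), g1 u) = ∫ u in Ioi (0:ℝ), g1 u := by
    have hcn := integral_comp_neg_Ioi (0:ℝ) g1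
    rw [neg_zero] at hcn
    rw [← hcn]
    congr 1
    ext u
    simp [hg1, neg_sq]
  have h3 : (∫ u, g1 u) = 2 * ∫ u in Ioi (0:ℝ), g1 u := by
    rw [← intervalIntegral.integral_Iic_add_Ioi hint1.integrableOn hint1.integrableOn, heven]
    ring
  have h4 : (2:ℝ) * (∫ t in Ioi (0:ℝ), 1 / Real.sqrt ((t^2+a^2)*(t^2+b^2)))
      = 2 * ∫ u in Ioi (0:ℝ), g1 u := by
    rw [← h3, h1, h2, MeasureTheory.integral_const_mul]
  have := mul_left_cancel₀ (two_ne_zero (α := ℝ)) h4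
  rw [this]

lemma trig_eq_J (a b : ℝ) (ha : 0 < a) (hb : 0 < b) :
    (∫ φ in (0:ℝ)..(Real.pi/2), 1 / Real.sqrt (a^2 * Real.cos φ^2 + b^2 * Real.sin φ^2))
      = ∫ t in Ioi (0:ℝ), 1 / Real.sqrt ((t^2+a^2)*(t^2+b^2)) := by
  set s := Ioo (0:ℝ) (Real.pi/2) with hs
  set f : ℝ → ℝ := fun φ => b * Real.tan φ with hf
  have hmem : ∀ φ ∈ s, φ ∈ Ioo (-(Real.pi/2)) (Real.pi/2) := by
    intro φ hφ
    exact ⟨by have := hφ.1; have := Real.pi_pos; linarith, hφ.2⟩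
  have hcos : ∀ φ ∈ s, 0 < Real.cos φ := fun φ hφ => Real.cos_pos_of_mem_Ioo (hmem φ hφ)
  -- image
  have himg : f '' s = Ioi 0 := by
    ext y
    constructor
    · rintro ⟨φ, hφ, rfl⟩
      have htan : 0 < Real.tan φ := Real.tan_pos_of_pos_of_lt_pi_div_two hφ.1 hφ.2
      exact mul_pos hb htan
    · intro hy
      have hy0 : (0:ℝ) < y := hy
      refine ⟨Real.arctan (y/b), ⟨by rw [← Real.arctan_zero]; exact Real.arctan_strictMono (by positivity), Real.arctan_lt_pi_div_two _⟩, ?_⟩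
      simp only [hf, Real.tan_arctan]
      field_simp
  -- injective
  have hinj : InjOn f s := by
    intro x hx y hy hxy
    have := Real.strictMonoOn_tan.injOn (hmem x hx) (hmem y hy) ?_
    · exact this
    · have : b * Real.tan x = b * Real.tan y := hxy
      exact mul_left_cancel₀ hb.ne' this
  -- derivative
  have hderiv : ∀ φ ∈ s, HasDerivWithinAt f (b * (1 / Real.cos φ^2)) s φ := by
    intro φ hφ
    exact ((Real.hasDerivAt_tan (hcos φ hφ).ne').const_mul b).hasDerivWithinAt
  -- pointwise
  have key : ∀ φ ∈ s, |b * (1 / Real.cos φ^2)| •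
      (1 / Real.sqrt (((f φ)^2+a^2)*((f φ)^2+b^2)))
      = 1 / Real.sqrt (a^2 * Real.cos φ^2 + b^2 * Real.sin φ^2) := by
    intro φ hφ
    have hc := hcos φ hφ
    have hQ : (0:ℝ) ≤ a^2 * Real.cos φ^2 + b^2 * Real.sin φ^2 := by positivity
    have e1 : ((f φ)^2+a^2)*((f φ)^2+b^2)
        = (Real.sqrt (a^2 * Real.cos φ^2 + b^2 * Real.sin φ^2) * (b / Real.cos φ^2))^2 := by
      have hc0 : Real.cos φ ≠ 0 := hc.ne'
      have ht2 : Real.tan φ ^ 2 = Real.sin φ^2 / Real.cos φ^2 := by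
        rw [Real.tan_eq_sin_div_cos]; ring
      have hA : b^2 * Real.tan φ^2 + a^2
          = (a^2*Real.cos φ^2 + b^2*Real.sin φ^2)/Real.cos φ^2 := by
        rw [ht2]; field_simp; ring
      have hB : b^2 * Real.tan φ^2 + b^2 = b^2/Real.cos φ^2 := by
        rw [ht2]; field_simp
        linear_combination Real.sin_sq_add_cos_sq φ
      conv_rhs => rw [mul_pow, Real.sq_sqrt hQ]
      simp only [hf]
      rw [mul_pow, hA, hB]
      field_simp
    have hQpos : 0 < a^2 * Real.cos φ^2 + b^2 * Real.sin φ^2 := by nlinarith [mul_pos (pow_pos ha 2) (pow_pos hc 2), sq_nonneg b, sq_nonneg (Real.sin φ), mul_nonneg (sq_nonneg b) (sq_nonneg (Real.sin φ))]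
    have hsq : 0 < Real.sqrt (a^2 * Real.cos φ^2 + b^2 * Real.sin φ^2) := Real.sqrt_pos.2 hQpos
    rw [smul_eq_mul, e1, Real.sqrt_sq (by positivity), abs_of_pos (by positivity)]
    field_simp
  -- assemble
  have hmeas : MeasurableSet s := measurableSet_Ioo
  have h1 : (∫ t in Ioi (0:ℝ), 1 / Real.sqrt ((t^2+a^2)*(t^2+b^2)))
      = ∫ φ in s, 1 / Real.sqrt (a^2 * Real.cos φ^2 + b^2 * Real.sin φ^2) := by
    rw [← himg, integral_image_eq_integral_abs_deriv_smul hmeas hderiv hinj]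
    exact setIntegral_congr_fun hmeas key
  rw [h1, hs, intervalIntegral.integral_of_le (by positivity), integral_Ioc_eq_integral_Ioo]

-- bounds on the trig integral
lemma trig_bounds (x y : ℝ) (hy : 0 < y) (hxy : y ≤ x) :
    Real.pi/(2*x) ≤ (∫ φ in (0:ℝ)..(Real.pi/2),
        1 / Real.sqrt (x^2 * Real.cos φ^2 + y^2 * Real.sin φ^2))
    ∧ (∫ φ in (0:ℝ)..(Real.pi/2),
        1 / Real.sqrt (x^2 * Real.cos φ^2 + y^2 * Real.sin φ^2)) ≤ Real.pi/(2*y) := by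
  have hx : 0 < x := lt_of_lt_of_le hy hxy
  have hle : (0:ℝ) ≤ Real.pi/2 := by positivity
  have hcont : Continuous (fun φ : ℝ => 1 / Real.sqrt (x^2 * Real.cos φ^2 + y^2 * Real.sin φ^2)) := by
    apply continuous_const.div
    · exact Real.continuous_sqrt.comp (by continuity)
    · intro φ
      have hxy2 : y^2 ≤ x^2 := by nlinarith
      have h1 : 0 < x^2 * Real.cos φ^2 + y^2 * Real.sin φ^2 := by
        nlinarith [Real.sin_sq_add_cos_sq φ, mul_nonneg (sub_nonneg.2 hxy2) (sq_nonneg (Real.cos φ)),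
          pow_pos hy 2]
      exact (Real.sqrt_pos.2 h1).ne'
  have hint : IntervalIntegrable (fun φ : ℝ => 1 / Real.sqrt (x^2 * Real.cos φ^2 + y^2 * Real.sin φ^2))
      volume 0 (Real.pi/2) := hcont.intervalIntegrable _ _
  have hbound : ∀ φ : ℝ, 1/x ≤ 1 / Real.sqrt (x^2 * Real.cos φ^2 + y^2 * Real.sin φ^2)
      ∧ 1 / Real.sqrt (x^2 * Real.cos φ^2 + y^2 * Real.sin φ^2) ≤ 1/y := by
    intro φ
    have hsc := Real.sin_sq_add_cos_sq φ
    have hxy2 : y^2 ≤ x^2 := by nlinarith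
    have hub : x^2 * Real.cos φ^2 + y^2 * Real.sin φ^2 ≤ x^2 := by
      nlinarith [hsc, mul_nonneg (sub_nonneg.2 hxy2) (sq_nonneg (Real.sin φ))]
    have hlb : y^2 ≤ x^2 * Real.cos φ^2 + y^2 * Real.sin φ^2 := by
      nlinarith [hsc, mul_nonneg (sub_nonneg.2 hxy2) (sq_nonneg (Real.cos φ))]
    have h1 : Real.sqrt (x^2 * Real.cos φ^2 + y^2 * Real.sin φ^2) ≤ x :=
      le_trans (Real.sqrt_le_sqrt hub) (le_of_eq (Real.sqrt_sq hx.le))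
    have h2 : y ≤ Real.sqrt (x^2 * Real.cos φ^2 + y^2 * Real.sin φ^2) :=
      le_trans (le_of_eq (Real.sqrt_sq hy.le).symm) (Real.sqrt_le_sqrt hlb)
    have hs : 0 < Real.sqrt (x^2 * Real.cos φ^2 + y^2 * Real.sin φ^2) := lt_of_lt_of_le hy h2
    constructor
    · rw [one_div, one_div]
      exact inv_anti₀ hs h1
    · rw [one_div, one_div]
      exact inv_anti₀ hy h2
  constructor
  · have := intervalIntegral.integral_mono_on hle (_root_.intervalIntegrable_const (c := 1/x)) hint
      (fun φ _ => (hbound φ).1)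
    rw [intervalIntegral.integral_const, smul_eq_mul, sub_zero] at this
    calc Real.pi/(2*x) = Real.pi/2 * (1/x) := by ring
    _ ≤ _ := this
  · have := intervalIntegral.integral_mono_on hle hint (_root_.intervalIntegrable_const (c := 1/y))
      (fun φ _ => (hbound φ).2)
    rw [intervalIntegral.integral_const, smul_eq_mul, sub_zero] at this
    calc _ ≤ Real.pi/2 * (1/y) := this
    _ = Real.pi/(2*y) := by ring

theorem gauss_agm_integral (a b : ℕ → ℝ)
    (ha0 : 0 < a 0) (hb0 : 0 < b 0)
    (ha : ∀ n, a (n + 1) = (a n + b n) / 2)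
    (hb : ∀ n, b (n + 1) = Real.sqrt (a n * b n))
    (M : ℝ)
    (hMa : Filter.Tendsto a Filter.atTop (nhds M))
    (hMb : Filter.Tendsto b Filter.atTop (nhds M)) :
    Real.pi / (2 * M) = ∫ φ in (0:ℝ)..(Real.pi / 2),
      1 / Real.sqrt ((a 0) ^ 2 * Real.cos φ ^ 2 + (b 0) ^ 2 * Real.sin φ ^ 2) := by
  -- positivity of sequences
  have hpos : ∀ n, 0 < a n ∧ 0 < b n := by
    intro n
    induction n with
    | zero => exact ⟨ha0, hb0⟩
    | succ k ih =>
      refine ⟨?_, ?_⟩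
      · rw [ha k]; linarith [ih.1, ih.2]
      · rw [hb k]; exact Real.sqrt_pos.2 (mul_pos ih.1 ih.2)
  -- b(n+1) ≤ a(n+1)
  have hba : ∀ n, b (n+1) ≤ a (n+1) := by
    intro n
    rw [ha n, hb n]
    have h1 : a n * b n ≤ ((a n + b n)/2)^2 := by nlinarith [sq_nonneg (a n - b n)]
    calc Real.sqrt (a n * b n) ≤ Real.sqrt (((a n + b n)/2)^2) := Real.sqrt_le_sqrt h1
    _ = (a n + b n)/2 := Real.sqrt_sq (by linarith [(hpos n).1, (hpos n).2])
  -- monotonicity from index 1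
  have hbmono : Monotone (fun k => b (k+1)) := by
    apply monotone_nat_of_le_succ
    intro k
    show b (k+1) ≤ b (k+2)
    rw [hb (k+1)]
    have h := hba k
    have hbp := (hpos (k+1)).2
    calc b (k+1) = Real.sqrt (b (k+1)^2) := (Real.sqrt_sq hbp.le).symm
    _ ≤ Real.sqrt (a (k+1) * b (k+1)) := Real.sqrt_le_sqrt (by nlinarith)
  have hamono : Antitone (fun k => a (k+1)) := by
    apply antitone_nat_of_succ_le
    intro k
    show a (k+2) ≤ a (k+1)
    rw [ha (k+1)]
    linarith [hba k]
  have htb : Tendsto (fun k => b (k+1)) atTop (nhds M) := hMb.comp (tendsto_add_atTop_nat 1)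
  have hta : Tendsto (fun k => a (k+1)) atTop (nhds M) := hMa.comp (tendsto_add_atTop_nat 1)
  have hbM : ∀ n, b (n+1) ≤ M := fun n => hbmono.ge_of_tendsto htb n
  have haM : ∀ n, M ≤ a (n+1) := fun n => hamono.le_of_tendsto hta n
  have hM : 0 < M := lt_of_lt_of_le (hpos 1).2 (hbM 0)
  -- invariance
  have hinv : ∀ n, (∫ t in Ioi (0:ℝ), 1 / Real.sqrt ((t^2+(a n)^2)*(t^2+(b n)^2)))
      = ∫ t in Ioi (0:ℝ), 1 / Real.sqrt ((t^2+(a 0)^2)*(t^2+(b 0)^2)) := by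
    intro n
    induction n with
    | zero => rfl
    | succ k ih =>
      rw [← ih, ha k, hb k]
      exact (J_step (a k) (b k) (hpos k).1 (hpos k).2).symm
  -- identify the integral
  set I0 := ∫ φ in (0:ℝ)..(Real.pi/2),
      1 / Real.sqrt ((a 0)^2 * Real.cos φ^2 + (b 0)^2 * Real.sin φ^2) with hI0
  have hIn : ∀ n, (∫ φ in (0:ℝ)..(Real.pi/2),
      1 / Real.sqrt ((a n)^2 * Real.cos φ^2 + (b n)^2 * Real.sin φ^2)) = I0 := by
    intro n
    rw [hI0, trig_eq_J (a n) (b n) (hpos n).1 (hpos n).2,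
      trig_eq_J (a 0) (b 0) ha0 hb0, hinv n]
  -- squeeze
  have hlow : ∀ n, Real.pi/(2 * a (n+1)) ≤ I0 := by
    intro n
    rw [← hIn (n+1)]
    exact (trig_bounds (a (n+1)) (b (n+1)) (hpos (n+1)).2 (hba n)).1
  have hup : ∀ n, I0 ≤ Real.pi/(2 * b (n+1)) := by
    intro n
    rw [← hIn (n+1)]
    exact (trig_bounds (a (n+1)) (b (n+1)) (hpos (n+1)).2 (hba n)).2
  have htl : Tendsto (fun n => Real.pi/(2 * a (n+1))) atTop (nhds (Real.pi/(2*M))) :=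
    tendsto_const_nhds.div (hta.const_mul 2) (by positivity)
  have htu : Tendsto (fun n => Real.pi/(2 * b (n+1))) atTop (nhds (Real.pi/(2*M))) :=
    tendsto_const_nhds.div (htb.const_mul 2) (by positivity)
  have h1 : Real.pi/(2*M) ≤ I0 := le_of_tendsto htl (Eventually.of_forall hlow)
  have h2 : I0 ≤ Real.pi/(2*M) := ge_of_tendsto htu (Eventually.of_forall hup)
  have : Real.pi/(2*M) = I0 := le_antisymm h1 h2
  rw [this, hI0]
end

section
/- The integral I(a,b) = ∫₀^{π/2} dφ/√(a²cos²φ + b²sin²φ) is invariant under one AGM step: I(a,b) = I((a+b)/2, √(ab)) for all a, b > 0. -/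
open MeasureTheory Set Real


noncomputable def gg (a b t : ℝ) : ℝ := (Real.sqrt ((t^2 + a^2) * (t^2 + b^2)))⁻¹
noncomputable def FF (a b φ : ℝ) : ℝ := (Real.sqrt (a^2 * Real.cos φ^2 + b^2 * Real.sin φ^2))⁻¹

lemma denom_pos {a b : ℝ} (ha : 0 < a) (hb : 0 < b) (φ : ℝ) :
    0 < a^2 * Real.cos φ^2 + b^2 * Real.sin φ^2 := by
  have h := Real.sin_sq_add_cos_sq φ
  rcases le_total a b with h1 | h1
  · have h2 : a^2 * Real.sin φ^2 ≤ b^2 * Real.sin φ^2 :=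
      mul_le_mul_of_nonneg_right (by nlinarith) (sq_nonneg _)
    nlinarith [mul_pos ha ha]
  · have h2 : b^2 * Real.cos φ^2 ≤ a^2 * Real.cos φ^2 :=
      mul_le_mul_of_nonneg_right (by nlinarith) (sq_nonneg _)
    nlinarith [mul_pos hb hb]

lemma FF_cont {a b : ℝ} (ha : 0 < a) (hb : 0 < b) : Continuous (FF a b) := by
  apply Continuous.inv₀
  · fun_prop
  · intro φ
    exact (Real.sqrt_pos.mpr (denom_pos ha hb φ)).ne'

lemma tan_image {b : ℝ} (hb : 0 < b) :
    (fun φ => b * Real.tan φ) '' Ioo 0 (Real.pi/2) = Ioi 0 := by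
  ext y
  constructor
  · rintro ⟨φ, ⟨h1, h2⟩, rfl⟩
    exact mul_pos hb (Real.tan_pos_of_pos_of_lt_pi_div_two h1 h2)
  · intro hy
    have hy' : (0:ℝ) < y := hy
    refine ⟨Real.arctan (y / b), ⟨?_, Real.arctan_lt_pi_div_two _⟩, ?_⟩
    · have : Real.arctan 0 < Real.arctan (y / b) :=
        Real.arctan_strictMono (by positivity)
      simpa [Real.arctan_zero] using this
    · show b * Real.tan _ = y
      rw [Real.tan_arctan]
      field_simp

lemma key_step1 {a b : ℝ} (ha : 0 < a) (hb : 0 < b) :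
    (∀ φ ∈ Ioo 0 (Real.pi/2),
      |b / Real.cos φ ^ 2| • gg a b (b * Real.tan φ) = FF a b φ) := by
  intro φ ⟨h1, h2⟩
  have hc : 0 < Real.cos φ := Real.cos_pos_of_mem_Ioo ⟨by linarith [Real.pi_pos], h2⟩
  have hsc : Real.sin φ^2 + Real.cos φ^2 = 1 := Real.sin_sq_add_cos_sq φ
  have ht : Real.tan φ = Real.sin φ / Real.cos φ := Real.tan_eq_sin_div_cos φ
  have hbc : 0 < b / Real.cos φ^2 := by positivity
  have harg : ((b * Real.tan φ)^2 + a^2) * ((b * Real.tan φ)^2 + b^2)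
      = (b / Real.cos φ^2)^2 * (a^2 * Real.cos φ^2 + b^2 * Real.sin φ^2) := by
    rw [ht]
    field_simp
    ring_nf
    linear_combination (a^2*Real.cos φ^2 + b^2*Real.sin φ^2) * hsc
  rw [gg, FF, harg, Real.sqrt_mul (sq_nonneg _), Real.sqrt_sq hbc.le,
    abs_of_pos hbc, smul_eq_mul, mul_inv]
  rw [← mul_assoc, mul_inv_cancel₀ hbc.ne']
  ring

section
variable {a b : ℝ}

lemma tan_hd (hb : 0 < b) : ∀ φ ∈ Ioo (0:ℝ) (Real.pi/2),
    HasDerivWithinAt (fun φ => b * Real.tan φ) (b / Real.cos φ^2) (Ioo 0 (Real.pi/2)) φ := by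
  intro φ ⟨h1, h2⟩
  have hc : 0 < Real.cos φ := Real.cos_pos_of_mem_Ioo ⟨by linarith [Real.pi_pos], h2⟩
  have := (Real.hasDerivAt_tan hc.ne').const_mul b
  exact this.hasDerivWithinAt.congr_deriv (by ring)

lemma tan_inj (hb : 0 < b) : InjOn (fun φ => b * Real.tan φ) (Ioo 0 (Real.pi/2)) := by
  have : StrictMonoOn (fun φ => b * Real.tan φ) (Ioo 0 (Real.pi/2)) := by
    intro x hx y hy hxy
    have := Real.strictMonoOn_tan (a := x) (b := y)
      ⟨by linarith [Real.pi_pos, hx.1], by linarith [hx.2]⟩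
      ⟨by linarith [Real.pi_pos, hy.1], by linarith [hy.2]⟩ hxy
    exact (mul_lt_mul_iff_right₀ hb).mpr this
  exact this.injOn

lemma step1 (ha : 0 < a) (hb : 0 < b) :
    ∫ t in Ioi (0:ℝ), gg a b t = ∫ φ in Ioo 0 (Real.pi/2), FF a b φ := by
  rw [← tan_image hb, integral_image_eq_integral_abs_deriv_smul measurableSet_Ioo
    (tan_hd hb) (tan_inj hb)]
  exact setIntegral_congr_fun measurableSet_Ioo (key_step1 ha hb)

lemma step1_int (ha : 0 < a) (hb : 0 < b) :
    IntegrableOn (gg a b) (Ioi (0:ℝ)) := by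
  rw [← tan_image hb,
    integrableOn_image_iff_integrableOn_abs_deriv_smul measurableSet_Ioo (tan_hd hb) (tan_inj hb)]
  exact ((((FF_cont ha hb).integrableOn_Icc (a := 0) (b := Real.pi/2)).mono_set
    Ioo_subset_Icc_self).congr_fun
    (fun φ hφ => (key_step1 ha hb φ hφ).symm) measurableSet_Ioo)


section
variable {a b : ℝ}

-- step 2 : inversion t ↦ ab/t
lemma step2 (ha : 0 < a) (hb : 0 < b) :
    ∫ t in Ioo (0:ℝ) (Real.sqrt (a*b)), gg a b t = ∫ t in Ioi (Real.sqrt (a*b)), gg a b t := by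
  set G := Real.sqrt (a*b) with hG
  have hab : 0 < a * b := mul_pos ha hb
  have hG0 : 0 < G := Real.sqrt_pos.mpr hab
  have hG2 : G^2 = a*b := Real.sq_sqrt hab.le
  have himg : (fun t => a*b*t⁻¹) '' Ioi G = Ioo 0 G := by
    ext y
    constructor
    · rintro ⟨t, ht, rfl⟩
      have ht0 : 0 < t := hG0.trans ht
      constructor
      · positivity
      · rw [mul_inv_lt_iff₀ ht0, ← hG2]
        have ht' : G < t := ht
        nlinarith [mul_pos hG0 (sub_pos.mpr ht')]
    · rintro ⟨hy0, hyG⟩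
      refine ⟨a*b/y, ?_, ?_⟩
      · show G < a*b/y
        rw [lt_div_iff₀ hy0, ← hG2]
        nlinarith [mul_pos hG0 (sub_pos.mpr hyG)]
      · field_simp
  have hd : ∀ t ∈ Ioi G,
      HasDerivWithinAt (fun t => a*b*t⁻¹) (a*b*(-(t^2)⁻¹)) (Ioi G) t := by
    intro t ht
    have ht0 : 0 < t := hG0.trans ht
    exact ((hasDerivAt_inv ht0.ne').const_mul (a*b)).hasDerivWithinAt
  have hinj : InjOn (fun t => a*b*t⁻¹) (Ioi G) := by
    intro x hx y hy h
    have hx0 : 0 < x := hG0.trans hx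
    have hy0 : 0 < y := hG0.trans hy
    field_simp at h
    exact h.symm
  have hkey : ∀ t ∈ Ioi G, |a*b*(-(t^2)⁻¹)| • gg a b (a*b*t⁻¹) = gg a b t := by
    intro t ht
    have ht0 : 0 < t := hG0.trans ht
    have hX : 0 < a*b/t^2 := by positivity
    have habs : |a*b*(-(t^2)⁻¹)| = a*b/t^2 := by
      rw [show a*b*(-(t^2)⁻¹) = -(a*b/t^2) by ring, abs_neg, abs_of_pos hX]
    have harg : ((a*b*t⁻¹)^2 + a^2) * ((a*b*t⁻¹)^2 + b^2)
        = (a*b/t^2)^2 * ((t^2+a^2)*(t^2+b^2)) := by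
      field_simp
      ring
    rw [habs, gg, gg, harg, Real.sqrt_mul (sq_nonneg _), Real.sqrt_sq hX.le,
      smul_eq_mul, mul_inv, ← mul_assoc, mul_inv_cancel₀ hX.ne']
    ring
  rw [← himg, integral_image_eq_integral_abs_deriv_smul measurableSet_Ioi hd hinj]
  exact setIntegral_congr_fun measurableSet_Ioi hkey

-- step 3 : u = (t - ab/t)/2
lemma step3 (ha : 0 < a) (hb : 0 < b) :
    ∫ u in Ioi (0:ℝ), gg ((a+b)/2) (Real.sqrt (a*b)) u
      = 2 * ∫ t in Ioi (Real.sqrt (a*b)), gg a b t := by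
  set G := Real.sqrt (a*b) with hG
  have hab : 0 < a * b := mul_pos ha hb
  have hG0 : 0 < G := Real.sqrt_pos.mpr hab
  have hG2 : G^2 = a*b := Real.sq_sqrt hab.le
  set f : ℝ → ℝ := fun t => (t - a*b*t⁻¹)/2 with hf
  set f' : ℝ → ℝ := fun t => (1 - a*b*(-(t^2)⁻¹))/2 with hf'
  have himg : f '' Ioi G = Ioi 0 := by
    ext u
    constructor
    · rintro ⟨t, ht, rfl⟩
      have ht0 : 0 < t := hG0.trans ht
      have ht' : G < t := ht
      have ht2 : a*b < t^2 := by
        nlinarith [mul_pos (sub_pos.mpr ht') (show (0:ℝ) < t + G by positivity)]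
      show 0 < (t - a*b*t⁻¹)/2
      rw [div_pos_iff]
      left
      constructor
      · rw [sub_pos, mul_inv_lt_iff₀ ht0]
        nlinarith
      · norm_num
    · intro hu
      have hu0 : 0 < u := hu
      set s := Real.sqrt (u^2 + a*b) with hs
      have hs2 : s^2 = u^2 + a*b := Real.sq_sqrt (by positivity)
      have hsG : G < s := Real.sqrt_lt_sqrt hab.le (by nlinarith)
      have hts : G < u + s := by linarith
      refine ⟨u + s, hts, ?_⟩
      show (u + s - a*b*(u+s)⁻¹)/2 = u
      have hne : u + s ≠ 0 := by positivity
      field_simp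
      linear_combination hs2
  have hd : ∀ t ∈ Ioi G, HasDerivWithinAt f (f' t) (Ioi G) t := by
    intro t ht
    have ht0 : 0 < t := hG0.trans ht
    exact (((hasDerivAt_id t).sub
      ((hasDerivAt_inv ht0.ne').const_mul (a*b))).div_const 2).hasDerivWithinAt
  have hinj : InjOn f (Ioi G) := by
    have hmono : StrictMonoOn f (Ioi G) := by
      intro x hx y hy hxy
      have hx0 : 0 < x := hG0.trans hx
      have hy0 : 0 < y := hG0.trans hy
      have h1 : y⁻¹ < x⁻¹ := by
        have := one_div_lt_one_div_of_lt hx0 hxy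
        simpa [one_div] using this
      have h2 : a*b*y⁻¹ < a*b*x⁻¹ := by
        exact mul_lt_mul_of_pos_left h1 hab
      show (x - a*b*x⁻¹)/2 < (y - a*b*y⁻¹)/2
      linarith
    exact hmono.injOn
  have hkey : ∀ t ∈ Ioi G, |f' t| • gg ((a+b)/2) G (f t) = 2 * gg a b t := by
    intro t ht
    have ht0 : 0 < t := hG0.trans ht
    have hX : 0 < (t^2 + a*b)/(4*t^2) := by positivity
    have habs : |f' t| = (t^2 + a*b)/(2*t^2) := by
      have : f' t = (t^2 + a*b)/(2*t^2) := by
        rw [hf']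
        field_simp
        ring
      rw [this, abs_of_pos (by positivity)]
    have harg : ((f t)^2 + ((a+b)/2)^2) * ((f t)^2 + G^2)
        = ((t^2+a*b)/(4*t^2))^2 * ((t^2+a^2)*(t^2+b^2)) := by
      rw [hf, hG2]
      field_simp
      ring
    rw [habs, gg, gg, harg, Real.sqrt_mul (sq_nonneg _), Real.sqrt_sq hX.le,
      smul_eq_mul, mul_inv, ← mul_assoc]
    have h4 : ((t^2+a*b)/(4*t^2))⁻¹ = (4*t^2)/(t^2+a*b) := by rw [inv_div]
    rw [show (t^2+a*b)/(2*t^2) * ((t^2+a*b)/(4*t^2))⁻¹ = 2 by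
      rw [h4]; field_simp; ring]
  rw [← himg, integral_image_eq_integral_abs_deriv_smul measurableSet_Ioi hd hinj,
    setIntegral_congr_fun measurableSet_Ioi hkey, MeasureTheory.integral_const_mul 2 (gg a b)]

end

theorem agm_step_invariance (a b : ℝ) (ha : 0 < a) (hb : 0 < b) :
    (∫ φ in (0:ℝ)..(Real.pi / 2),
        1 / Real.sqrt (a ^ 2 * Real.cos φ ^ 2 + b ^ 2 * Real.sin φ ^ 2)) =
    ∫ φ in (0:ℝ)..(Real.pi / 2),
        1 / Real.sqrt (((a + b) / 2) ^ 2 * Real.cos φ ^ 2 +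
          (Real.sqrt (a * b)) ^ 2 * Real.sin φ ^ 2) := by
  have hab : 0 < a * b := mul_pos ha hb
  have hG0 : 0 < Real.sqrt (a*b) := Real.sqrt_pos.mpr hab
  have hA0 : 0 < (a+b)/2 := by linarith
  have hpi : (0:ℝ) ≤ Real.pi/2 := by positivity
  have hL : (∫ φ in (0:ℝ)..(Real.pi / 2),
      1 / Real.sqrt (a ^ 2 * Real.cos φ ^ 2 + b ^ 2 * Real.sin φ ^ 2))
      = ∫ φ in Ioo 0 (Real.pi/2), FF a b φ := by
    rw [intervalIntegral.integral_of_le hpi, integral_Ioc_eq_integral_Ioo]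
    simp [FF, one_div]
  have hR : (∫ φ in (0:ℝ)..(Real.pi / 2),
      1 / Real.sqrt (((a + b) / 2) ^ 2 * Real.cos φ ^ 2 +
        (Real.sqrt (a * b)) ^ 2 * Real.sin φ ^ 2))
      = ∫ φ in Ioo 0 (Real.pi/2), FF ((a+b)/2) (Real.sqrt (a*b)) φ := by
    rw [intervalIntegral.integral_of_le hpi, integral_Ioc_eq_integral_Ioo]
    simp [FF, one_div]
  rw [hL, hR, ← step1 ha hb, ← step1 hA0 hG0]
  have hsplit : ∫ t in Ioi (0:ℝ), gg a b t
      = (∫ t in Ioo (0:ℝ) (Real.sqrt (a*b)), gg a b t)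
        + ∫ t in Ici (Real.sqrt (a*b)), gg a b t := by
    rw [← setIntegral_union ((Set.Iio_disjoint_Ici le_rfl).mono_left Set.Ioo_subset_Iio_self)
      measurableSet_Ici
      ((step1_int ha hb).mono_set (fun x hx => hx.1))
      ((step1_int ha hb).mono_set (fun x hx => lt_of_lt_of_le hG0 hx)),
      Ioo_union_Ici_eq_Ioi hG0]
  rw [step3 ha hb, hsplit, step2 ha hb, integral_Ici_eq_integral_Ioi]
  ring
end
end

section
/- Define R₀ = R > 0 and sequences k₀ = k ∈ (0,1), R_{j+1} = R_j/k_j, k_{j+1} determined by √(1−k_{j+1}²) = (1−k_j)/(1+k_j). Then for all n ≥ 1, R_n/R_{n+1} = √(R_{n−1}R_n) / ((R_{n−1}+R_n)/2). -/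
/-!
Since `R_{j+1} = R_j / k_j`, both sides only see moduli: the left side is `k_n`, and the ratio of
the geometric to the arithmetic mean of `R_{n-1}, R_n` is `2 √k_{n-1} / (1 + k_{n-1})`. That is
exactly the ascending Landen transformation, which is what `√(1 - k_n²) = (1 - k_{n-1}) / (1 + k_{n-1})`
says once it is solved for `k_n`.
-/

theorem landen_modulus_eq {k k' : ℝ} (hk : 0 ≤ k) (hk' : k' ∈ Set.Icc (0 : ℝ) 1)
    (h : √(1 - k' ^ 2) = (1 - k) / (1 + k)) : k' = 2 * √k / (1 + k) := by
  have hk1 : 0 < 1 + k := by linarith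
  have hsq : 1 - k' ^ 2 = ((1 - k) / (1 + k)) ^ 2 := by
    rw [← h, Real.sq_sqrt (by nlinarith [hk'.1, hk'.2])]
  refine (pow_left_inj₀ hk'.1 (by positivity) two_ne_zero).1 ?_
  rw [div_pow, mul_pow, Real.sq_sqrt hk]
  field_simp at hsq ⊢
  linarith

theorem sqrt_mul_div_add_half {a b : ℝ} (ha : 0 ≤ a) (hb : 0 < b) :
    √(a * b) / ((a + b) / 2) = 2 * √(a / b) / (1 + a / b) := by
  have hab : a * b = a / b * b ^ 2 := by field_simp
  rw [hab, Real.sqrt_mul (div_nonneg ha hb.le), Real.sqrt_sq hb.le]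
  field_simp
  ring

theorem lemaitre_radii_recursion (R : ℝ) (hR : 0 < R)
    (k : ℕ → ℝ) (Rs : ℕ → ℝ)
    (hR0 : Rs 0 = R)
    (hk : ∀ j, k j ∈ Set.Ioo (0:ℝ) 1)
    (hRs : ∀ j, Rs (j + 1) = Rs j / k j)
    (hkrec : ∀ j, Real.sqrt (1 - (k (j + 1)) ^ 2) = (1 - k j) / (1 + k j)) :
    ∀ n : ℕ, 1 ≤ n →
      Rs n / Rs (n + 1) =
        Real.sqrt (Rs (n - 1) * Rs n) / ((Rs (n - 1) + Rs n) / 2) := by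
  have hpos : ∀ j, 0 < Rs j := by
    intro j
    induction j with
    | zero => rwa [hR0]
    | succ j ih => rw [hRs j]; exact div_pos ih (hk j).1
  have hratio : ∀ j, Rs j / Rs (j + 1) = k j := fun j => by
    rw [hRs j, div_div_cancel₀ (hpos j).ne']
  intro n hn
  obtain ⟨m, rfl⟩ : ∃ m, n = m + 1 := ⟨n - 1, by omega⟩
  rw [Nat.add_sub_cancel, sqrt_mul_div_add_half (hpos m).le (hpos (m + 1)), hratio, hratio]
  exact landen_modulus_eq (hk m).1.le (Set.Ioo_subset_Icc_self (hk (m + 1))) (hkrec m)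
end

section
/- With R₀ = R, R₁ = R/k and the recursion R_{n+1} = R_n · ((R_{n−1}+R_n)/2)/√(R_{n−1}R_n), the sequence R_j converges, and its limit equals R·(M(R₁, R)/R)², where M is the arithmetic–geometric mean. -/
theorem lemaitre_radii_limit (R kk : ℝ) (hR : 0 < R) (hk0 : 0 < kk) (hk1 : kk < 1)
    (Rs : ℕ → ℝ) (hR0 : Rs 0 = R) (hR1 : Rs 1 = R / kk)
    (hrec : ∀ n, Rs (n + 2) =
      Rs (n + 1) * ((Rs n + Rs (n + 1)) / 2) / Real.sqrt (Rs n * Rs (n + 1)))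
    (a b : ℕ → ℝ) (ha0 : a 0 = R / kk) (hb0 : b 0 = R)
    (ha : ∀ n, a (n + 1) = (a n + b n) / 2)
    (hb : ∀ n, b (n + 1) = Real.sqrt (a n * b n))
    (M : ℝ)
    (hMa : Filter.Tendsto a Filter.atTop (nhds M))
    (hMb : Filter.Tendsto b Filter.atTop (nhds M)) :
    Filter.Tendsto Rs Filter.atTop (nhds (R * (M / R) ^ 2)) := by
  have hpos : ∀ n, 0 < a n ∧ 0 < b n := by
    intro n
    induction n with
    | zero => exact ⟨by rw [ha0]; positivity, by rw [hb0]; exact hR⟩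
    | succ n ih =>
      obtain ⟨h1, h2⟩ := ih
      exact ⟨by rw [ha]; positivity, by rw [hb]; positivity⟩
  have hbsq : ∀ n, b (n + 1) ^ 2 = a n * b n := by
    intro n
    rw [hb, Real.sq_sqrt (le_of_lt (mul_pos (hpos n).1 (hpos n).2))]
  have key : ∀ n, Rs n = b n ^ 2 / R ∧ Rs (n + 1) = b (n + 1) ^ 2 / R := by
    intro n
    induction n with
    | zero =>
      constructor
      · rw [hR0, hb0]; field_simp
      · rw [hR1, hbsq 0, ha0, hb0]; field_simp
    | succ n ih =>
      obtain ⟨h1, h2⟩ := ih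
      refine ⟨h2, ?_⟩
      have hbn := (hpos n).2
      have hbn1 : 0 < b (n + 1) := (hpos (n + 1)).2
      have hsqrt : Real.sqrt (Rs n * Rs (n + 1)) = b n * b (n + 1) / R := by
        rw [h1, h2]
        have : b n ^ 2 / R * (b (n + 1) ^ 2 / R) = (b n * b (n + 1) / R) ^ 2 := by
          ring
        rw [this, Real.sqrt_sq (by positivity)]
      rw [hrec n, hsqrt, h1, h2, hbsq (n + 1), ha n, hbsq n]
      field_simp
      linear_combination (-(a n + b n)) * hbsq n
  have hRs : ∀ n, Rs n = b n ^ 2 / R := fun n => (key n).1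
  have : Filter.Tendsto (fun n => b n ^ 2 / R) Filter.atTop (nhds (M ^ 2 / R)) :=
    (hMb.pow 2).div_const R
  have heq : R * (M / R) ^ 2 = M ^ 2 / R := by field_simp
  rw [heq]
  exact this.congr (fun n => (hRs n).symm)
end

section
/- For 0 < k < 1 with k' = √(1−k²), one has M(1, k') = π/(2K(k)), where M is the arithmetic–geometric mean and K(k) = ∫₀^{π/2} dφ/√(1−k²sin²φ). -/
open MeasureTheory Set Filter Real

noncomputable def Jagm (a b : ℝ) : ℝ :=
  ∫ x in Ioi (0:ℝ), (Real.sqrt ((x^2 + a^2) * (x^2 + b^2)))⁻¹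

lemma agm_aux_image {a b : ℝ} (ha : 0 < a) (hb : 0 < b) :
    (fun x : ℝ => (x - a*b/x)/2) '' Ioi 0 = univ := by
  apply eq_univ_of_forall
  intro u
  set s := Real.sqrt (u^2 + a*b) with hs_def
  have hab : 0 < a*b := mul_pos ha hb
  have hs2 : s^2 = u^2 + a*b := Real.sq_sqrt (by nlinarith)
  have hsn : 0 ≤ s := Real.sqrt_nonneg _
  have hx : 0 < u + s := by nlinarith
  refine ⟨u + s, hx, ?_⟩
  field_simp
  nlinarith [hs2]

lemma agm_aux_inj {a b : ℝ} (ha : 0 < a) (hb : 0 < b) :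
    InjOn (fun x : ℝ => (x - a*b/x)/2) (Ioi 0) := by
  intro x hx y hy h
  simp only [mem_Ioi] at hx hy
  have h2 : x - a*b/x = y - a*b/y := by dsimp at h; linarith
  have key : (x - y) * (x*y + a*b) = 0 := by
    field_simp at h2
    nlinarith [h2]
  have : x*y + a*b > 0 := by positivity
  have := mul_eq_zero.1 key
  rcases this with h' | h'
  · linarith
  · linarith

lemma agm_aux_deriv {a b : ℝ} {x : ℝ} (hx : 0 < x) :
    HasDerivAt (fun x : ℝ => (x - a*b/x)/2) ((1 + a*b/x^2)/2) x := by
  have h1 : HasDerivAt (fun x : ℝ => x - a*b/x) (1 + a*b/x^2) x := by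
    have := ((hasDerivAt_inv hx.ne').const_mul (a*b))
    have h := (hasDerivAt_id x).sub this
    convert h using 1
    · rfl
    · rfl
    · funext y; simp [div_eq_mul_inv]
    · ring
  exact h1.div_const 2

lemma agm_aux_algebra {a b x : ℝ} (ha : 0 < a) (hb : 0 < b) (hx : 0 < x) :
    |(1 + a*b/x^2)/2| * (Real.sqrt (((x - a*b/x)/2)^2 + ((a+b)/2)^2) *
      Real.sqrt (((x - a*b/x)/2)^2 + (Real.sqrt (a*b))^2))⁻¹
    = 2 * (Real.sqrt ((x^2 + a^2) * (x^2 + b^2)))⁻¹ := by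
  have hab : 0 < a * b := mul_pos ha hb
  set S := Real.sqrt ((x^2 + a^2) * (x^2 + b^2)) with hS
  have hS2 : S^2 = (x^2 + a^2) * (x^2 + b^2) := Real.sq_sqrt (by positivity)
  have hSpos : 0 < S := Real.sqrt_pos.2 (by positivity)
  have h1 : ((x - a*b/x)/2)^2 + ((a+b)/2)^2 = S^2 / (4*x^2) := by
    rw [hS2]; field_simp; ring
  have h2 : ((x - a*b/x)/2)^2 + (Real.sqrt (a*b))^2 = ((x + a*b/x)/2)^2 := by
    rw [Real.sq_sqrt hab.le]; field_simp; ring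
  have hxab : 0 < x + a*b/x := by positivity
  rw [h1, h2, Real.sqrt_sq (by positivity : (0:ℝ) ≤ (x + a*b/x)/2)]
  have h3 : Real.sqrt (S^2 / (4*x^2)) = S / (2*x) := by
    rw [show S^2/(4*x^2) = (S/(2*x))^2 by ring, Real.sqrt_sq (by positivity)]
  rw [h3, abs_of_pos (by positivity)]
  field_simp

lemma Jagm_invariant {a b : ℝ} (ha : 0 < a) (hb : 0 < b) :
    Jagm ((a+b)/2) (Real.sqrt (a*b)) = Jagm a b := by
  set g : ℝ → ℝ := fun u => (Real.sqrt ((u^2 + ((a+b)/2)^2) * (u^2 + (Real.sqrt (a*b))^2)))⁻¹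
    with hg
  have hcv := integral_image_eq_integral_abs_deriv_smul (f' := fun x => (1 + a*b/x^2)/2)
      measurableSet_Ioi
      (fun x hx => (agm_aux_deriv (a := a) (b := b) (mem_Ioi.1 hx)).hasDerivWithinAt)
      (agm_aux_inj ha hb) g
  rw [agm_aux_image ha hb] at hcv
  have heven : ∫ u : ℝ, g u = 2 * Jagm ((a+b)/2) (Real.sqrt (a*b)) := by
    rw [show Jagm ((a+b)/2) (Real.sqrt (a*b)) = ∫ u in Ioi (0:ℝ), g u from rfl]
    rw [← _root_.integral_comp_abs (f := g)]
    congr 1 with u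
    simp [hg, sq_abs]
  have hrhs : (∫ x in Ioi (0:ℝ), |(1 + a*b/x^2)/2| • g ((x - a*b/x)/2))
      = 2 * Jagm a b := by
    rw [show Jagm a b = ∫ x in Ioi (0:ℝ), (Real.sqrt ((x^2 + a^2) * (x^2 + b^2)))⁻¹ from rfl]
    rw [← MeasureTheory.integral_const_mul]
    refine setIntegral_congr_fun measurableSet_Ioi (fun x hx => ?_)
    have := agm_aux_algebra ha hb (mem_Ioi.1 hx)
    simpa [hg, Real.sqrt_mul (by positivity : (0:ℝ) ≤ ((x - a*b/x)/2)^2 + ((a+b)/2)^2)] using this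
  rw [MeasureTheory.setIntegral_univ, heven, hrhs] at hcv
  linarith

lemma Jagm_diag {m : ℝ} (hm : 0 < m) : Jagm m m = π / (2 * m) := by
  have h1 : Jagm m m = ∫ x in Ioi (0:ℝ), (x^2 + m^2)⁻¹ := by
    refine setIntegral_congr_fun measurableSet_Ioi (fun x _ => ?_)
    rw [show (x^2 + m^2) * (x^2 + m^2) = (x^2+m^2)^2 by ring,
      Real.sqrt_sq (by positivity)]
  have h2 : (∫ x in Ioi (0:ℝ), ((m*x)^2 + m^2)⁻¹) = m⁻¹ • ∫ x in Ioi (m*0:ℝ), (x^2+m^2)⁻¹ :=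
    MeasureTheory.integral_comp_mul_left_Ioi (fun x => (x^2+m^2)⁻¹) 0 hm
  have h3 : (∫ x in Ioi (0:ℝ), ((m*x)^2 + m^2)⁻¹)
      = ∫ x in Ioi (0:ℝ), (m^2)⁻¹ * (1 + x^2)⁻¹ := by
    refine setIntegral_congr_fun measurableSet_Ioi (fun x _ => ?_)
    rw [← mul_inv, show (m*x)^2 + m^2 = m^2 * (1+x^2) by ring]
  rw [h3, MeasureTheory.integral_const_mul, integral_Ioi_inv_one_add_sq, Real.arctan_zero] at h2
  rw [h1, show m * (0:ℝ) = 0 by ring] at *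
  have : (m^2)⁻¹ * (π/2 - 0) = m⁻¹ * ∫ x in Ioi (0:ℝ), (x^2+m^2)⁻¹ := by
    simpa using h2
  have hm2 : (m:ℝ) ≠ 0 := hm.ne'
  field_simp at this ⊢
  nlinarith [this]

lemma Kagm_eq {k : ℝ} (h0 : 0 < k) (h1 : k < 1) :
    (∫ φ in (0:ℝ)..(π/2), 1 / Real.sqrt (1 - k^2 * Real.sin φ^2))
      = Jagm 1 (Real.sqrt (1-k^2)) := by
  set k' := Real.sqrt (1-k^2) with hk'def
  have hk2 : k'^2 = 1-k^2 := Real.sq_sqrt (by nlinarith)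
  have hk' : 0 < k' := Real.sqrt_pos.2 (by nlinarith)
  set s : Set ℝ := Ioo 0 (π/2) with hs
  set f : ℝ → ℝ := fun φ => k' * Real.tan φ with hf
  have hsub : ∀ φ ∈ s, φ ∈ Ioo (-(π/2)) (π/2) := by
    rintro φ ⟨h1', h2'⟩
    exact ⟨by linarith [Real.pi_pos], h2'⟩
  have hcos : ∀ φ ∈ s, 0 < Real.cos φ := fun φ hφ =>
    Real.cos_pos_of_mem_Ioo (hsub φ hφ)
  -- image
  have himg : f '' s = Ioi 0 := by
    apply Subset.antisymm
    · rintro _ ⟨φ, hφ, rfl⟩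
      exact mem_Ioi.2 (mul_pos hk' (Real.tan_pos_of_pos_of_lt_pi_div_two hφ.1 hφ.2))
    · intro u hu
      have hu0 : 0 < u := mem_Ioi.1 hu
      refine ⟨Real.arctan (u/k'), ⟨by simpa using Real.arctan_strictMono (by positivity : (0:ℝ) < u/k'), Real.arctan_lt_pi_div_two _⟩, ?_⟩
      simp [hf, Real.tan_arctan]
      field_simp
  -- derivative
  have hderiv : ∀ φ ∈ s, HasDerivAt f (k' / Real.cos φ^2) φ := by
    intro φ hφ
    have := (Real.hasDerivAt_tan (hcos φ hφ).ne').const_mul k'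
    simpa [mul_one_div, div_eq_mul_inv, hf] using this
  -- injectivity
  have hinj : InjOn f s := by
    intro x hx y hy h
    exact Real.injOn_tan (hsub x hx) (hsub y hy) (mul_left_cancel₀ hk'.ne' h)
  have hcv := integral_image_eq_integral_abs_deriv_smul (f' := fun φ => k' / Real.cos φ^2)
      measurableSet_Ioo (fun φ hφ => (hderiv φ hφ).hasDerivWithinAt) hinj
      (fun x => (Real.sqrt ((x^2 + 1^2) * (x^2 + k'^2)))⁻¹)
  rw [himg] at hcv
  have halg : ∀ φ ∈ s, |k' / Real.cos φ^2| •
      (Real.sqrt (((f φ)^2 + 1^2) * ((f φ)^2 + k'^2)))⁻¹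
      = 1 / Real.sqrt (1 - k^2 * Real.sin φ^2) := by
    intro φ hφ
    have hc := hcos φ hφ
    have hsc : Real.sin φ^2 + Real.cos φ^2 = 1 := Real.sin_sq_add_cos_sq φ
    have hone : 0 < 1 - k^2 * Real.sin φ^2 := by
      nlinarith [Real.sin_sq_le_one φ]
    have hP : ((f φ)^2 + 1^2) * ((f φ)^2 + k'^2)
        = (k' * Real.sqrt (1 - k^2 * Real.sin φ^2) / Real.cos φ^2)^2 := by
      have hq : (k' * Real.sqrt (1 - k^2 * Real.sin φ^2))^2
          = k'^2 * (1 - k^2 * Real.sin φ^2) := by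
        rw [mul_pow, Real.sq_sqrt hone.le]
      have hF1 : (f φ)^2 + 1^2 = (1 - k^2 * Real.sin φ^2)/Real.cos φ^2 := by
        simp only [hf, Real.tan_eq_sin_div_cos, mul_pow, div_pow]
        rw [hk2]
        field_simp
        nlinarith [hsc]
      have hF2 : (f φ)^2 + k'^2 = k'^2/Real.cos φ^2 := by
        simp only [hf, Real.tan_eq_sin_div_cos, mul_pow, div_pow]
        field_simp
        nlinarith [hsc]
      rw [hF1, hF2, div_pow, hq]
      field_simp
    rw [hP, Real.sqrt_sq (by positivity), abs_of_pos (by positivity)]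
    rw [smul_eq_mul]
    field_simp
  rw [MeasureTheory.setIntegral_congr_fun measurableSet_Ioo halg] at hcv
  rw [intervalIntegral.integral_of_le (by positivity : (0:ℝ) ≤ π/2),
    MeasureTheory.integral_Ioc_eq_integral_Ioo, ← hcv]
  rfl

theorem agm_elliptic (k : ℝ) (h0 : 0 < k) (h1 : k < 1)
    (a b : ℕ → ℝ) (ha0 : a 0 = 1) (hb0 : b 0 = Real.sqrt (1 - k ^ 2))
    (ha : ∀ n, a (n + 1) = (a n + b n) / 2)
    (hb : ∀ n, b (n + 1) = Real.sqrt (a n * b n))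
    (M : ℝ)
    (hMa : Filter.Tendsto a Filter.atTop (nhds M))
    (hMb : Filter.Tendsto b Filter.atTop (nhds M)) :
    M = Real.pi /
      (2 * ∫ φ in (0:ℝ)..(Real.pi / 2), 1 / Real.sqrt (1 - k ^ 2 * Real.sin φ ^ 2)) := by
  have hπ := Real.pi_pos
  set k' := Real.sqrt (1 - k ^ 2) with hk'def
  have h1k : (0:ℝ) < 1 - k^2 := by nlinarith
  have hk'pos : 0 < k' := Real.sqrt_pos.2 h1k
  have hk'sq : k'^2 = 1 - k^2 := Real.sq_sqrt h1k.le
  have hk'lt1 : k' < 1 := by nlinarith [hk'sq, hk'pos]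
  -- invariants
  have key : ∀ n, 0 < b n ∧ b n ≤ a n ∧ a n ≤ 1 ∧ k' ≤ b n := by
    intro n
    induction n with
    | zero => rw [ha0, hb0]; exact ⟨hk'pos, hk'lt1.le, le_refl 1, le_refl _⟩
    | succ n ih =>
      obtain ⟨hbpos, hba, ha1, hk'b⟩ := ih
      have hapos : 0 < a n := lt_of_lt_of_le hbpos hba
      have amgm : Real.sqrt (a n * b n) ≤ (a n + b n)/2 := by
        have h := Real.sqrt_le_sqrt (show a n * b n ≤ ((a n + b n)/2)^2 by nlinarith)
        rwa [Real.sqrt_sq (by positivity)] at h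
      have hbmono : b n ≤ Real.sqrt (a n * b n) := by
        have h := Real.sqrt_le_sqrt (show b n ^2 ≤ a n * b n by nlinarith)
        rwa [Real.sqrt_sq hbpos.le] at h
      refine ⟨?_, ?_, ?_, ?_⟩
      · rw [hb n]; exact Real.sqrt_pos.2 (by positivity)
      · rw [hb n, ha n]; exact amgm
      · rw [ha n]; linarith
      · rw [hb n]; linarith
  have hbpos : ∀ n, 0 < b n := fun n => (key n).1
  have hapos : ∀ n, 0 < a n := fun n => lt_of_lt_of_le (hbpos n) (key n).2.1
  have hMk' : k' ≤ M := ge_of_tendsto' hMb fun n => (key n).2.2.2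
  have hMpos : 0 < M := lt_of_lt_of_le hk'pos hMk'
  -- invariance of Jagm
  have hJconst : ∀ n, Jagm (a n) (b n) = Jagm 1 k' := by
    intro n
    induction n with
    | zero => rw [ha0, hb0]
    | succ n ih => rw [ha n, hb n, Jagm_invariant (hapos n) (hbpos n)]; exact ih
  -- dominated convergence
  set F : ℕ → ℝ → ℝ :=
    fun n x => (Real.sqrt ((x^2 + (a n)^2) * (x^2 + (b n)^2)))⁻¹ with hF
  have htend : Filter.Tendsto (fun n => Jagm (a n) (b n)) Filter.atTop (nhds (Jagm M M)) := by
    apply MeasureTheory.tendsto_integral_of_dominated_convergence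
      (fun x => (k'^2)⁻¹ * (1 + x^2)⁻¹)
    · intro n
      have han := hapos n
      have hbn := hbpos n
      have hc : Continuous fun x : ℝ => Real.sqrt ((x^2+(a n)^2)*(x^2+(b n)^2)) :=
        Real.continuous_sqrt.comp (by continuity)
      exact (hc.inv₀ fun x =>
        (Real.sqrt_pos.2 (by positivity : (0:ℝ) < (x^2+(a n)^2)*(x^2+(b n)^2))).ne').aestronglyMeasurable
    · exact (integrable_inv_one_add_sq.const_mul _).integrableOn
    · intro n
      refine Filter.Eventually.of_forall fun x => ?_
      have hf1 : k'^2 * (1+x^2) ≤ x^2 + (b n)^2 := by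
        nlinarith [(key n).2.2.2, hbpos n, hk'lt1, sq_nonneg x]
      have hf2 : k'^2 * (1+x^2) ≤ x^2 + (a n)^2 := by
        nlinarith [(key n).2.2.2, (key n).2.1, hbpos n, hk'lt1, sq_nonneg x]
      have hle : k'^2 * (1+x^2) ≤ Real.sqrt ((x^2+(a n)^2)*(x^2+(b n)^2)) := by
        rw [show k'^2*(1+x^2) = Real.sqrt ((k'^2*(1+x^2))^2) from
          (Real.sqrt_sq (by positivity)).symm]
        apply Real.sqrt_le_sqrt
        calc (k'^2*(1+x^2))^2 = (k'^2*(1+x^2)) * (k'^2*(1+x^2)) := sq _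
          _ ≤ (x^2+(a n)^2)*(x^2+(b n)^2) :=
              mul_le_mul hf2 hf1 (by positivity) (by positivity)
      have h0' : 0 < k'^2*(1+x^2) := by positivity
      rw [Real.norm_eq_abs, abs_of_nonneg (by positivity)]
      calc F n x ≤ (k'^2*(1+x^2))⁻¹ := by
            exact inv_anti₀ h0' hle
        _ = (k'^2)⁻¹ * (1+x^2)⁻¹ := by rw [mul_inv]
    · refine Filter.Eventually.of_forall fun x => ?_
      have hM' := hMpos
      have hmul : Filter.Tendsto (fun n => (x^2+(a n)^2)*(x^2+(b n)^2)) Filter.atTop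
          (nhds ((x^2+M^2)*(x^2+M^2))) :=
        (Filter.Tendsto.add tendsto_const_nhds (hMa.pow 2)).mul
          (Filter.Tendsto.add tendsto_const_nhds (hMb.pow 2))
      have hsq : Filter.Tendsto (fun n => Real.sqrt ((x^2+(a n)^2)*(x^2+(b n)^2)))
          Filter.atTop (nhds (Real.sqrt ((x^2+M^2)*(x^2+M^2)))) :=
        (Real.continuous_sqrt.continuousAt).tendsto.comp hmul
      exact hsq.inv₀ (Real.sqrt_pos.2 (by positivity)).ne'
  have hconst : Filter.Tendsto (fun n => Jagm (a n) (b n)) Filter.atTop (nhds (Jagm 1 k')) := by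
    simp only [hJconst]; exact tendsto_const_nhds
  have hJeq : Jagm 1 k' = Jagm M M := tendsto_nhds_unique hconst htend
  rw [Jagm_diag hMpos] at hJeq
  rw [Kagm_eq h0 h1, ← hk'def, hJeq]
  field_simp
end
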